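/- For Re(μ) + 1/2 > |Re(λ)| and z > 0, the Whittaker function satisfies M_{λ,μ}(z) = [Γ(1+2μ) z^{μ+1/2} 2^{-2μ} / (Γ(1/2+μ-λ) Γ(1/2+μ+λ))] ∫_{-1}^{1} e^{zt/2} (1+t)^{μ-1/2-λ} (1-t)^{μ-1/2+λ} dt. -/

import Mathlib

open MeasureTheory Set

/-- Kummer's confluent hypergeometric function M(a,b,z). -/
noncomputable def kummerM (a b z : ℝ) : ℝ :=
  ∑' n : ℕ, ((∏ i ∈ Finset.range n, (a + i)) / ((∏ i ∈ Finset.range n, (b + i)) * n.factorial)) * z ^ n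

/-- The Whittaker function M_{λ,μ}(z). -/
noncomputable def whittakerM (lam mu z : ℝ) : ℝ :=
  Real.exp (-z / 2) * z ^ (mu + 1 / 2) * kummerM (1 / 2 + mu - lam) (1 + 2 * mu) z

/-! With `a = 1/2 + μ - λ` and `c = 1/2 + μ + λ`, both positive, the substitution `t = 2s - 1`
turns the integral into `2^(2μ) e^(-z/2) ∫₀¹ e^(zs) s^(a-1) (1-s)^(c-1) ds`. Expanding `e^(zs)`
and integrating termwise, which is legitimate because the `n`-th term has absolute integral at
most `|z|ⁿ/n! · B(a,c)`, gives `∑ zⁿ/n! · B(a+n,c)`; since `Γ(a+n) = (a)ₙ Γ(a)`, this is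
`B(a,c) · M(a, a+c, z)`. -/
theorem Real.Gamma_add_nat_eq_prod_mul {x : ℝ} (hx : ∀ k : ℕ, x + k ≠ 0) (n : ℕ) :
    Real.Gamma (x + n) = (∏ i ∈ Finset.range n, (x + i)) * Real.Gamma x := by
  induction n with
  | zero => simp
  | succ n ih =>
    rw [Nat.cast_succ, ← add_assoc, Real.Gamma_add_one (hx n), ih, Finset.prod_range_succ]
    ring

theorem Complex.ofReal_rpow_mul_one_sub_rpow {s : ℝ} (hs : s ∈ Icc (0 : ℝ) 1) (a c : ℝ) :
    ((s ^ (a - 1) * (1 - s) ^ (c - 1) : ℝ) : ℂ)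
      = (s : ℂ) ^ ((a : ℂ) - 1) * (1 - (s : ℂ)) ^ ((c : ℂ) - 1) := by
  rw [Complex.ofReal_mul, Complex.ofReal_cpow hs.1, Complex.ofReal_cpow (sub_nonneg.2 hs.2)]
  push_cast
  rfl

theorem integrableOn_rpow_mul_one_sub_rpow {a c : ℝ} (ha : 0 < a) (hc : 0 < c) :
    IntegrableOn (fun s : ℝ => s ^ (a - 1) * (1 - s) ^ (c - 1)) (Ioo 0 1) := by
  have h := Complex.betaIntegral_convergent (u := a) (v := c) (by simpa) (by simpa)
  rw [intervalIntegrable_iff_integrableOn_Ioc_of_le zero_le_one] at h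
  refine IntegrableOn.congr_fun (h.mono_set Ioo_subset_Ioc_self).re (fun s hs => ?_)
    measurableSet_Ioo
  rw [← Complex.ofReal_rpow_mul_one_sub_rpow (Ioo_subset_Icc_self hs)]
  exact Complex.ofReal_re _

theorem integral_rpow_mul_one_sub_rpow {a c : ℝ} (ha : 0 < a) (hc : 0 < c) :
    ∫ s in Ioo (0 : ℝ) 1, s ^ (a - 1) * (1 - s) ^ (c - 1)
      = Real.Gamma a * Real.Gamma c / Real.Gamma (a + c) := by
  have hB := ProbabilityTheory.beta_eq_betaIntegralReal a c ha hc
  rw [ProbabilityTheory.beta, Complex.betaIntegral, intervalIntegral.integral_of_le zero_le_one,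
    integral_Ioc_eq_integral_Ioo, ← setIntegral_congr_fun measurableSet_Ioo
      (fun s hs => Complex.ofReal_rpow_mul_one_sub_rpow (Ioo_subset_Icc_self hs) a c),
    integral_complex_ofReal, Complex.ofReal_re] at hB
  exact hB.symm

theorem hasSum_exp_mul_rpow_mul_one_sub_rpow {a c s : ℝ} (hs : 0 < s) (z : ℝ) :
    HasSum (fun n : ℕ => z ^ n / n.factorial * (s ^ (a + n - 1) * (1 - s) ^ (c - 1)))
      (Real.exp (z * s) * s ^ (a - 1) * (1 - s) ^ (c - 1)) := by
  have h := (NormedSpace.expSeries_div_hasSum_exp (z * s)).mul_right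
    (s ^ (a - 1) * (1 - s) ^ (c - 1))
  rw [← Real.exp_eq_exp_ℝ, ← mul_assoc] at h
  refine (congrArg (HasSum · _) (funext fun n => ?_)).mpr h
  rw [add_sub_right_comm, Real.rpow_add hs, Real.rpow_natCast, mul_pow]
  ring

theorem integral_exp_mul_rpow_mul_one_sub_rpow {a c : ℝ} (ha : 0 < a) (hc : 0 < c) (z : ℝ) :
    ∫ s in Ioo (0 : ℝ) 1, Real.exp (z * s) * s ^ (a - 1) * (1 - s) ^ (c - 1)
      = ∑' n : ℕ, z ^ n / n.factorial
          * (Real.Gamma (a + n) * Real.Gamma c / Real.Gamma (a + n + c)) := by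
  set F : ℕ → ℝ → ℝ := fun n s =>
    z ^ n / n.factorial * (s ^ (a + n - 1) * (1 - s) ^ (c - 1))
  have hF_int (n : ℕ) : IntegrableOn (F n) (Ioo 0 1) :=
    (integrableOn_rpow_mul_one_sub_rpow (by positivity) hc).const_mul _
  have hF_norm (n : ℕ) : ∀ s ∈ Ioo (0 : ℝ) 1,
      ‖F n s‖ ≤ |z| ^ n / n.factorial * (s ^ (a - 1) * (1 - s) ^ (c - 1)) := by
    intro s ⟨hs0, hs1⟩
    have h1s : 0 ≤ (1 - s) ^ (c - 1) := Real.rpow_nonneg (by linarith) _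
    rw [norm_mul, norm_div, norm_pow, Real.norm_natCast, Real.norm_eq_abs,
      Real.norm_of_nonneg (by positivity : 0 ≤ s ^ (a + n - 1) * (1 - s) ^ (c - 1))]
    refine mul_le_mul_of_nonneg_left (mul_le_mul_of_nonneg_right ?_ h1s) (by positivity)
    exact Real.rpow_le_rpow_of_exponent_ge hs0 hs1.le (by linarith [n.cast_nonneg (α := ℝ)])
  have hsum : Summable fun n => ∫ s in Ioo (0 : ℝ) 1, ‖F n s‖ := by
    refine ((Real.summable_pow_div_factorial |z|).mul_right
      (∫ s in Ioo (0 : ℝ) 1, s ^ (a - 1) * (1 - s) ^ (c - 1))).of_nonneg_of_le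
      (fun n => integral_nonneg fun s => norm_nonneg _) (fun n => ?_)
    rw [← integral_const_mul]
    exact setIntegral_mono_on (hF_int n).norm
      ((integrableOn_rpow_mul_one_sub_rpow ha hc).const_mul _) measurableSet_Ioo (hF_norm n)
  calc ∫ s in Ioo (0 : ℝ) 1, Real.exp (z * s) * s ^ (a - 1) * (1 - s) ^ (c - 1)
      = ∫ s in Ioo (0 : ℝ) 1, ∑' n, F n s :=
        setIntegral_congr_fun measurableSet_Ioo fun s hs =>
          (hasSum_exp_mul_rpow_mul_one_sub_rpow hs.1 z).tsum_eq.symm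
    _ = ∑' n, ∫ s in Ioo (0 : ℝ) 1, F n s :=
        (integral_tsum_of_summable_integral_norm hF_int hsum).symm
    _ = _ := by
      refine tsum_congr fun n => ?_
      rw [integral_const_mul, integral_rpow_mul_one_sub_rpow (by positivity) hc]

theorem kummerM_eq_integral {a c : ℝ} (ha : 0 < a) (hc : 0 < c) (z : ℝ) :
    kummerM a (a + c) z = Real.Gamma (a + c) / (Real.Gamma a * Real.Gamma c)
      * ∫ s in Ioo (0 : ℝ) 1, Real.exp (z * s) * s ^ (a - 1) * (1 - s) ^ (c - 1) := by
  rw [integral_exp_mul_rpow_mul_one_sub_rpow ha hc z, kummerM, ← tsum_mul_left]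
  refine tsum_congr fun n => ?_
  have hΓa := Real.Gamma_add_nat_eq_prod_mul (x := a) (fun k => by positivity) n
  have hΓac := Real.Gamma_add_nat_eq_prod_mul (x := a + c) (fun k => by positivity) n
  have hprod : 0 < ∏ i ∈ Finset.range n, (a + c + i) := Finset.prod_pos fun i _ => by positivity
  rw [add_right_comm, hΓa, hΓac]
  have hΓa_pos := Real.Gamma_pos_of_pos ha
  have hΓc_pos := Real.Gamma_pos_of_pos hc
  have hΓac_pos := Real.Gamma_pos_of_pos (add_pos ha hc)
  field_simp

theorem integral_Ioo_neg_one_one_eq_integral_Ioo_zero_one (a c z : ℝ) :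
    ∫ t in Ioo (-1 : ℝ) 1, Real.exp (z * t / 2) * (1 + t) ^ (a - 1) * (1 - t) ^ (c - 1)
      = 2 ^ (a + c - 1) * Real.exp (-z / 2)
        * ∫ s in Ioo (0 : ℝ) 1, Real.exp (z * s) * s ^ (a - 1) * (1 - s) ^ (c - 1) := by
  have hsub := intervalIntegral.smul_integral_comp_mul_sub (a := 0) (b := 1)
    (fun t => Real.exp (z * t / 2) * (1 + t) ^ (a - 1) * (1 - t) ^ (c - 1)) 2 1
  norm_num only [mul_zero, mul_one, zero_sub, smul_eq_mul] at hsub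
  rw [intervalIntegral.integral_of_le zero_le_one,
    intervalIntegral.integral_of_le (by norm_num : (-1 : ℝ) ≤ 1),
    integral_Ioc_eq_integral_Ioo, integral_Ioc_eq_integral_Ioo] at hsub
  have htwo : (2 : ℝ) ^ (a + c - 1) = 2 * (2 ^ (a - 1) * 2 ^ (c - 1)) := by
    rw [show a + c - 1 = 1 + ((a - 1) + (c - 1)) by ring, Real.rpow_add two_pos,
      Real.rpow_add two_pos, Real.rpow_one]
  rw [← hsub, htwo, mul_assoc, mul_assoc]
  congr 1
  rw [← mul_assoc, ← integral_const_mul]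
  refine setIntegral_congr_fun measurableSet_Ioo fun s ⟨hs0, hs1⟩ => ?_
  rw [show 1 + (2 * s - 1) = 2 * s by ring, show 1 - (2 * s - 1) = 2 * (1 - s) by ring,
    Real.mul_rpow zero_le_two hs0.le, Real.mul_rpow zero_le_two (by linarith),
    show z * (2 * s - 1) / 2 = -z / 2 + z * s by ring, Real.exp_add]
  ring

theorem whittaker_integral_representation_general (lam mu z : ℝ) (h : mu + 1 / 2 > |lam|) :
    whittakerM lam mu z
      = (Real.Gamma (1 + 2 * mu) * z ^ (mu + 1 / 2) * (2 : ℝ) ^ (-2 * mu)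
          / (Real.Gamma (1 / 2 + mu - lam) * Real.Gamma (1 / 2 + mu + lam)))
        * ∫ t in Ioo (-1 : ℝ) 1,
            Real.exp (z * t / 2) * (1 + t) ^ (mu - 1 / 2 - lam) * (1 - t) ^ (mu - 1 / 2 + lam) := by
  have ha : 0 < 1 / 2 + mu - lam := by linarith [le_abs_self lam]
  have hc : 0 < 1 / 2 + mu + lam := by linarith [neg_abs_le lam]
  set a := 1 / 2 + mu - lam
  set c := 1 / 2 + mu + lam
  rw [whittakerM, show 1 + 2 * mu = a + c by ring, show mu - 1 / 2 - lam = a - 1 by ring,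
    show mu - 1 / 2 + lam = c - 1 by ring, kummerM_eq_integral ha hc,
    integral_Ioo_neg_one_one_eq_integral_Ioo_zero_one, show a + c - 1 = 2 * mu by ring,
    neg_mul, Real.rpow_neg zero_le_two]
  have htwo_pos : 0 < (2 : ℝ) ^ (2 * mu) := by positivity
  field_simp

theorem whittaker_integral_representation (lam mu z : ℝ) (h : mu + 1 / 2 > |lam|) (hz : z > 0) :
    whittakerM lam mu z
      = (Real.Gamma (1 + 2 * mu) * z ^ (mu + 1 / 2) * (2 : ℝ) ^ (-2 * mu)
          / (Real.Gamma (1 / 2 + mu - lam) * Real.Gamma (1 / 2 + mu + lam)))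
        * ∫ t in Ioo (-1 : ℝ) 1,
            Real.exp (z * t / 2) * (1 + t) ^ (mu - 1 / 2 - lam) * (1 - t) ^ (mu - 1 / 2 + lam) :=
  whittaker_integral_representation_general lam mu z h
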